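/- Let V = ⊕_{β∈F^{l₂+l₃}} V_β be a generalized weight module of S(l₁,l₂,l₃;0,Γ) (with l₁+l₂ ≥ 3, l₂+l₃ ≥ 3) such that there is σ ∈ Γ and μ ∈ F^{l₂+l₃} with V = V_{σ+μ} (a single generalized weight space). If V is irreducible or indecomposable, then σ + μ = 0 and V is the one-dimensional trivial module. -/

import Mathlib

/-!
An element `D_{p,q}(x^α t^i)` with `α ≠ 0` shifts generalized weights by `α`, so it acts as zero
on a module with a single generalized weight. Precisely: if `α_r ≠ 0`, then `[∂_r, D_{p,q}(x^α t^i)]`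
is `α_r D_{p,q}(x^α t^i)` plus a multiple of `D_{p,q}(x^α t^{i - 1_[r]})`, which acts as zero by
induction on `i_r`, and an operator whose commutator with `ρ(∂_r)` is `α_r ≠ 0` times itself
moves the single generalized eigenvalue of `ρ(∂_r)`, hence vanishes. Since `Γ` spans, the
remaining generators `D_{p,q}(t^i)` are combinations of brackets of such elements, so `S` acts
trivially. Then every subspace is invariant, irreducibility or indecomposability forces
`dim V = 1`, and `σ + μ` is a generalized eigenvalue of the zero operator, i.e. `σ + μ = 0`.
-/

open scoped BigOperators

namespace SDF

variable (F : Type) [Field F] [IsAlgClosed F] [CharZero F]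
variable (l₁ l₂ l₃ : ℕ) (Γ : AddSubgroup (Fin (l₂ + l₃) → F))

/-- The semigroup algebra `A(l₁,l₂,l₃;Γ) = F[Γ × ℕ^{l₁+l₂}]`,
with basis `x^α t^i` for `α ∈ Γ`, `i ∈ ℕ^{l₁+l₂}`. -/
abbrev Alg : Type := AddMonoidAlgebra F (↥Γ × (Fin (l₁ + l₂) →₀ ℕ))

/-- The basis monomial `x^α t^i`. -/
noncomputable def mono (α : Γ) (i : Fin (l₁ + l₂) →₀ ℕ) : Alg F l₁ l₂ l₃ Γ :=
  AddMonoidAlgebra.single (α, i) 1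

/-- The `p`-th coordinate of `α ∈ Γ ⊆ F^{l₂+l₃}`, with the convention `α_p = 0` for `p ≤ l₁`. -/
def acoord (p : Fin (l₁ + l₂ + l₃)) (α : Γ) : F :=
  if h : l₁ ≤ (p : ℕ) then (α : Fin (l₂ + l₃) → F) ⟨(p : ℕ) - l₁, by have := p.isLt; omega⟩
  else 0

/-- The `p`-th coordinate of a general `μ ∈ F^{l₂+l₃}`, with the convention `μ_p = 0` for `p ≤ l₁`. -/
def fcoord (p : Fin (l₁ + l₂ + l₃)) (μ : Fin (l₂ + l₃) → F) : F :=
  if h : l₁ ≤ (p : ℕ) then μ ⟨(p : ℕ) - l₁, by have := p.isLt; omega⟩ else 0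

/-- The `p`-th component of `i ∈ ℕ^{l₁+l₂}`, with the convention `i_p = 0` for `p > l₁+l₂`. -/
def icoord (p : Fin (l₁ + l₂ + l₃)) (i : Fin (l₁ + l₂) →₀ ℕ) : ℕ :=
  if h : (p : ℕ) < l₁ + l₂ then i ⟨(p : ℕ), h⟩ else 0

/-- `i - 1_[p]` (truncated subtraction; only used with coefficient `i_p`). -/
noncomputable def lower (p : Fin (l₁ + l₂ + l₃)) (i : Fin (l₁ + l₂) →₀ ℕ) : Fin (l₁ + l₂) →₀ ℕ :=
  if h : (p : ℕ) < l₁ + l₂ then i - Finsupp.single ⟨(p : ℕ), h⟩ 1 else i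

/-- The derivation `∂_p` of `A(l₁,l₂,l₃;Γ)`:
`∂_p(x^α t^i) = α_p x^α t^i + i_p x^α t^{i - 1_[p]}`. -/
noncomputable def pd (p : Fin (l₁ + l₂ + l₃)) :
    Alg F l₁ l₂ l₃ Γ →ₗ[F] Alg F l₁ l₂ l₃ Γ :=
  (Finsupp.lsum F fun g : ↥Γ × (Fin (l₁ + l₂) →₀ ℕ) =>
    LinearMap.toSpanSingleton F (Alg F l₁ l₂ l₃ Γ)
      (acoord F l₁ l₂ l₃ Γ p g.1 • mono F l₁ l₂ l₃ Γ g.1 g.2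
        + (icoord l₁ l₂ l₃ p g.2 : F) • mono F l₁ l₂ l₃ Γ g.1 (lower l₁ l₂ l₃ p g.2)))
    ∘ₗ (AddMonoidAlgebra.coeffLinearEquiv F).toLinearMap

/-- The Witt algebra `W(l₁,l₂,l₃;Γ) = A·D`; the tuple `u : Wt` represents `Σ_p u_p ∂_p`. -/
abbrev Wt : Type := Fin (l₁ + l₂ + l₃) → Alg F l₁ l₂ l₃ Γ

/-- The Lie bracket of `W(l₁,l₂,l₃;Γ)`:
`[Σ_p u_p ∂_p, Σ_q v_q ∂_q] = Σ_{p,q} (u_p ∂_p(v_q) - v_p ∂_p(u_q)) ∂_q`. -/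
noncomputable def wbr (u v : Wt F l₁ l₂ l₃ Γ) : Wt F l₁ l₂ l₃ Γ :=
  fun r => ∑ p, (u p * pd F l₁ l₂ l₃ Γ p (v r) - v p * pd F l₁ l₂ l₃ Γ p (u r))

/-- `D_{p,q}(u) = ∂_p(u) ∂_q - ∂_q(u) ∂_p`. -/
noncomputable def Dpq (p q : Fin (l₁ + l₂ + l₃)) (u : Alg F l₁ l₂ l₃ Γ) :
    Wt F l₁ l₂ l₃ Γ :=
  Pi.single q (pd F l₁ l₂ l₃ Γ p u) - Pi.single p (pd F l₁ l₂ l₃ Γ q u)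

/-- The divergence-free algebra `S(l₁,l₂,l₃;0,Γ) = Span{D_{p,q}(u)}`. -/
noncomputable def Ssub : Submodule F (Wt F l₁ l₂ l₃ Γ) :=
  Submodule.span F {w | ∃ p q u, w = Dpq F l₁ l₂ l₃ Γ p q u}

/-- `Γ` is nondegenerate: it contains an `F`-basis of `F^{l₂+l₃}`, i.e. it spans. -/
def Nondeg : Prop := Submodule.span F (Γ : Set (Fin (l₂ + l₃) → F)) = ⊤

/-- The divergence `div(Σ_p u_p ∂_p) = Σ_p ∂_p(u_p)`. -/
noncomputable def dvg (w : Wt F l₁ l₂ l₃ Γ) : Alg F l₁ l₂ l₃ Γ :=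
  ∑ p, pd F l₁ l₂ l₃ Γ p (w p)

/-- The action of `Σ_p u_p ∂_p ∈ W` on `A_μ` (the space `A` with basis `v_{β,i}` the monomials):
`(u ∂_p) . v = u * (∂_p + μ_p) v`. On basis elements this gives exactly the defining formulas
of the module `A_μ`. -/
noncomputable def actW (μ : Fin (l₂ + l₃) → F) (X : Wt F l₁ l₂ l₃ Γ) :
    Alg F l₁ l₂ l₃ Γ →ₗ[F] Alg F l₁ l₂ l₃ Γ :=
  ∑ p, (LinearMap.mulLeft F (X p)).comp
    (pd F l₁ l₂ l₃ Γ p + fcoord F l₁ l₂ l₃ p μ • LinearMap.id)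

/-- The element `Σ_p a_p ∂_p` of `D ⊆ W`. -/
noncomputable def wD (a : Fin (l₁ + l₂ + l₃) → F) : Wt F l₁ l₂ l₃ Γ :=
  fun p => algebraMap F (Alg F l₁ l₂ l₃ Γ) (a p)

/-- The element `∂_p ∈ W`. -/
noncomputable def wdelta (p : Fin (l₁ + l₂ + l₃)) : Wt F l₁ l₂ l₃ Γ :=
  Pi.single p 1

/-- `β(∂) = Σ_{p>l₁} a_p β_p` for `∂ = Σ_p a_p ∂_p`. -/
def beval (β : Fin (l₂ + l₃) → F) (a : Fin (l₁ + l₂ + l₃) → F) : F :=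
  ∑ p, a p * fcoord F l₁ l₂ l₃ p β


section AbstractModule

variable {V : Type} [AddCommGroup V] [Module F V]
variable (ρ : ↥(Ssub F l₁ l₂ l₃ Γ) →ₗ[F] Module.End F V)

/-- `N` is an `S`-invariant subspace of the representation `ρ`. -/
def InvSub (N : Submodule F V) : Prop :=
  ∀ (X : Wt F l₁ l₂ l₃ Γ) (hX : X ∈ Ssub F l₁ l₂ l₃ Γ), ∀ v ∈ N, ρ ⟨X, hX⟩ v ∈ N

/-- The representation `ρ` is irreducible. -/
def IsIrrRep : Prop :=
  (∃ v : V, v ≠ 0) ∧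
    ∀ N : Submodule F V, InvSub F l₁ l₂ l₃ Γ ρ N → N = ⊥ ∨ N = ⊤

/-- The representation `ρ` is indecomposable. -/
def IsIndecRep : Prop :=
  (∃ v : V, v ≠ 0) ∧
    ∀ N₁ N₂ : Submodule F V, InvSub F l₁ l₂ l₃ Γ ρ N₁ → InvSub F l₁ l₂ l₃ Γ ρ N₂ →
      N₁ ⊓ N₂ = ⊥ → N₁ ⊔ N₂ = ⊤ → N₁ = ⊥ ∨ N₂ = ⊥

end AbstractModule

section GenEigenspace

variable {K V : Type*} [Field K] [AddCommGroup V] [Module K V]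

lemma apply_mem_genEigenspace_add_of_commutator_eq_smul {T E : Module.End K V} {c : K}
    (hTE : T * E - E * T = c • E) {μ : K} {k : ℕ∞} {v : V}
    (hv : v ∈ T.genEigenspace μ k) : E v ∈ T.genEigenspace (μ + c) k := by
  have hconj : SemiconjBy E (T - μ • 1) (T - (μ + c) • 1) :=
    calc E * (T - μ • 1) = E * T - μ • E := by rw [mul_sub, mul_smul_comm, mul_one]
      _ = T * E - (μ + c) • E := by rw [add_smul, ← hTE]; abel
      _ = (T - (μ + c) • 1) * E := by rw [sub_mul, smul_mul_assoc, one_mul]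
  obtain ⟨l, hl, hv⟩ := Module.End.mem_genEigenspace.mp hv
  refine Module.End.mem_genEigenspace.mpr ⟨l, hl, ?_⟩
  rw [LinearMap.mem_ker, ← Module.End.mul_apply, ← (hconj.pow_right l).eq, Module.End.mul_apply,
    LinearMap.mem_ker.mp hv, map_zero]

lemma eq_zero_of_commutator_eq_smul {T E : Module.End K V} {c μ : K}
    (hTE : T * E - E * T = c • E) (hc : c ≠ 0) (hT : T.maxGenEigenspace μ = ⊤) : E = 0 := by
  ext v
  have hmem (w : V) : w ∈ T.maxGenEigenspace μ := hT ▸ Submodule.mem_top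
  have hdisj := T.disjoint_genEigenspace (μ₁ := μ + c) (μ₂ := μ) (by simpa) ⊤ ⊤
  exact Submodule.disjoint_def.mp hdisj _
    (apply_mem_genEigenspace_add_of_commutator_eq_smul hTE (hmem v)) (hmem (E v))

lemma eq_zero_of_mem_genEigenspace_zero {μ : K} {k : ℕ∞} {v : V}
    (hv : v ∈ (0 : Module.End K V).genEigenspace μ k) (hv0 : v ≠ 0) : μ = 0 := by
  by_contra hμ
  exact hv0 (Submodule.disjoint_def.mp ((0 : Module.End K V).disjoint_genEigenspace hμ k 1) v hv
    (by simp))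

end GenEigenspace

section Coordinates

variable {F : Type} [Field F] {l₁ l₂ l₃ : ℕ} {Γ : AddSubgroup (Fin (l₂ + l₃) → F)}

lemma fcoord_add (p : Fin (l₁ + l₂ + l₃)) (μ ν : Fin (l₂ + l₃) → F) :
    fcoord F l₁ l₂ l₃ p (μ + ν) = fcoord F l₁ l₂ l₃ p μ + fcoord F l₁ l₂ l₃ p ν := by
  unfold fcoord; split <;> simp

lemma fcoord_neg (p : Fin (l₁ + l₂ + l₃)) (μ : Fin (l₂ + l₃) → F) :
    fcoord F l₁ l₂ l₃ p (-μ) = -fcoord F l₁ l₂ l₃ p μ := by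
  unfold fcoord; split <;> simp

lemma fcoord_zero (p : Fin (l₁ + l₂ + l₃)) : fcoord F l₁ l₂ l₃ p 0 = 0 := by
  unfold fcoord; split <;> simp

lemma fcoord_natAdd (β : Fin (l₂ + l₃) → F) (k : Fin (l₂ + l₃)) :
    fcoord F l₁ l₂ l₃ (Fin.cast (Nat.add_assoc ..).symm (Fin.natAdd l₁ k)) β = β k := by
  simp [fcoord]

lemma beval_single (β : Fin (l₂ + l₃) → F) (p : Fin (l₁ + l₂ + l₃)) :
    beval F l₁ l₂ l₃ β (Pi.single p 1) = fcoord F l₁ l₂ l₃ p β := by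
  simp [beval, Pi.single_apply]

lemma exists_fcoord_ne_zero {μ : Fin (l₂ + l₃) → F} (hμ : μ ≠ 0) :
    ∃ p : Fin (l₁ + l₂ + l₃), fcoord F l₁ l₂ l₃ p μ ≠ 0 := by
  obtain ⟨k, hk⟩ := Function.ne_iff.mp hμ
  exact ⟨_, (fcoord_natAdd μ k).symm ▸ hk⟩

lemma Nondeg.exists_fcoord_ne_zero (hΓ : Nondeg F l₂ l₃ Γ) {p : Fin (l₁ + l₂ + l₃)}
    (hp : l₁ ≤ (p : ℕ)) : ∃ α : Γ, fcoord F l₁ l₂ l₃ p α ≠ 0 := by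
  set k : Fin (l₂ + l₃) := ⟨p - l₁, by omega⟩
  by_contra! h
  have hΓk : (Γ : Set (Fin (l₂ + l₃) → F))
      ⊆ LinearMap.ker (LinearMap.proj k : (Fin (l₂ + l₃) → F) →ₗ[F] F) :=
    fun x hx => by simpa [fcoord, hp] using h ⟨x, hx⟩
  have := Submodule.span_le.mpr hΓk (hΓ ▸ Submodule.mem_top : Pi.single k 1 ∈ _)
  simp at this

lemma coe_ne_zero_of_fcoord_ne_zero {p : Fin (l₁ + l₂ + l₃)} {α : Γ}
    (h : fcoord F l₁ l₂ l₃ p α ≠ 0) : (α : Fin (l₂ + l₃) → F) ≠ 0 :=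
  fun hα => h (by rw [hα, fcoord_zero])

lemma icoord_add (p : Fin (l₁ + l₂ + l₃)) (i i' : Fin (l₁ + l₂) →₀ ℕ) :
    icoord l₁ l₂ l₃ p (i + i') = icoord l₁ l₂ l₃ p i + icoord l₁ l₂ l₃ p i' := by
  unfold icoord; split <;> simp

lemma icoord_of_lt {p : Fin (l₁ + l₂ + l₃)} (hp : (p : ℕ) < l₁ + l₂) (i : Fin (l₁ + l₂) →₀ ℕ) :
    icoord l₁ l₂ l₃ p i = i ⟨p, hp⟩ :=
  dif_pos hp

lemma icoord_of_not_lt {p : Fin (l₁ + l₂ + l₃)} (hp : ¬(p : ℕ) < l₁ + l₂)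
    (i : Fin (l₁ + l₂) →₀ ℕ) : icoord l₁ l₂ l₃ p i = 0 :=
  dif_neg hp

lemma lower_of_lt {p : Fin (l₁ + l₂ + l₃)} (hp : (p : ℕ) < l₁ + l₂) (i : Fin (l₁ + l₂) →₀ ℕ) :
    lower l₁ l₂ l₃ p i = i - Finsupp.single ⟨p, hp⟩ 1 :=
  dif_pos hp

lemma lower_of_not_lt {p : Fin (l₁ + l₂ + l₃)} (hp : ¬(p : ℕ) < l₁ + l₂)
    (i : Fin (l₁ + l₂) →₀ ℕ) : lower l₁ l₂ l₃ p i = i :=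
  dif_neg hp

lemma icoord_single_self {p : Fin (l₁ + l₂ + l₃)} (hp : (p : ℕ) < l₁ + l₂) :
    icoord l₁ l₂ l₃ p (Finsupp.single ⟨p, hp⟩ 1) = 1 := by
  simp [icoord_of_lt hp]

lemma icoord_single_of_ne {p q : Fin (l₁ + l₂ + l₃)} (hp : (p : ℕ) < l₁ + l₂) (hpq : p ≠ q) :
    icoord l₁ l₂ l₃ q (Finsupp.single ⟨p, hp⟩ 1) = 0 := by
  by_cases hq : (q : ℕ) < l₁ + l₂
  · rw [icoord_of_lt hq, Finsupp.single_eq_of_ne]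
    simpa [Fin.ext_iff] using fun h => hpq (Fin.ext h.symm)
  · exact icoord_of_not_lt hq _

lemma icoord_lower_self (p : Fin (l₁ + l₂ + l₃)) (i : Fin (l₁ + l₂) →₀ ℕ) :
    icoord l₁ l₂ l₃ p (lower l₁ l₂ l₃ p i) = icoord l₁ l₂ l₃ p i - 1 := by
  by_cases hp : (p : ℕ) < l₁ + l₂
  · simp [icoord_of_lt hp, lower_of_lt hp]
  · simp [icoord_of_not_lt hp]

lemma icoord_lower_of_ne {p q : Fin (l₁ + l₂ + l₃)} (hpq : p ≠ q) (i : Fin (l₁ + l₂) →₀ ℕ) :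
    icoord l₁ l₂ l₃ p (lower l₁ l₂ l₃ q i) = icoord l₁ l₂ l₃ p i := by
  by_cases hq : (q : ℕ) < l₁ + l₂
  · by_cases hp : (p : ℕ) < l₁ + l₂
    · rw [lower_of_lt hq, icoord_of_lt hp, icoord_of_lt hp, Finsupp.tsub_apply,
        Finsupp.single_eq_of_ne (by simpa [Fin.ext_iff] using fun h => hpq (Fin.ext h)),
        tsub_zero]
    · rw [icoord_of_not_lt hp, icoord_of_not_lt hp]
  · rw [lower_of_not_lt hq]

lemma lower_comm (p q : Fin (l₁ + l₂ + l₃)) (i : Fin (l₁ + l₂) →₀ ℕ) :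
    lower l₁ l₂ l₃ p (lower l₁ l₂ l₃ q i) = lower l₁ l₂ l₃ q (lower l₁ l₂ l₃ p i) := by
  by_cases hp : (p : ℕ) < l₁ + l₂ <;> by_cases hq : (q : ℕ) < l₁ + l₂ <;>
    simp only [lower_of_lt, lower_of_not_lt, hp, hq, not_false_iff]
  exact tsub_right_comm

lemma lower_add (p : Fin (l₁ + l₂ + l₃)) (i i' : Fin (l₁ + l₂) →₀ ℕ)
    (h : icoord l₁ l₂ l₃ p i ≠ 0 ∨ icoord l₁ l₂ l₃ p i' = 0) :
    lower l₁ l₂ l₃ p (i + i') = lower l₁ l₂ l₃ p i + i' := by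
  by_cases hp : (p : ℕ) < l₁ + l₂
  · simp only [lower_of_lt hp, icoord_of_lt hp] at h ⊢
    ext t
    simp only [Finsupp.tsub_apply, Finsupp.add_apply, Finsupp.single_apply]
    split_ifs with ht <;> subst_vars <;> omega
  · simp only [lower_of_not_lt hp]

lemma single_add_lower {p : Fin (l₁ + l₂ + l₃)} (hp : (p : ℕ) < l₁ + l₂)
    {i : Fin (l₁ + l₂) →₀ ℕ} (h : icoord l₁ l₂ l₃ p i ≠ 0) :
    Finsupp.single ⟨p, hp⟩ 1 + lower l₁ l₂ l₃ p i = i := by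
  rw [lower_of_lt hp]
  rw [icoord_of_lt hp] at h
  exact add_tsub_cancel_of_le (Finsupp.single_le_iff.mpr (Nat.one_le_iff_ne_zero.mpr h))

lemma lower_add_single_self {q : Fin (l₁ + l₂ + l₃)} (hq : (q : ℕ) < l₁ + l₂)
    (i : Fin (l₁ + l₂) →₀ ℕ) : lower l₁ l₂ l₃ q (i + Finsupp.single ⟨q, hq⟩ 1) = i := by
  rw [lower_of_lt hq, add_tsub_cancel_right]

end Coordinates

section Derivations

variable {F : Type} [Field F] {l₁ l₂ l₃ : ℕ} {Γ : AddSubgroup (Fin (l₂ + l₃) → F)}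

local notation "𝔪" => mono F l₁ l₂ l₃ Γ
local notation "𝔡" => pd F l₁ l₂ l₃ Γ

lemma mono_mul (α α' : Γ) (i i' : Fin (l₁ + l₂) →₀ ℕ) :
    𝔪 α i * 𝔪 α' i' = 𝔪 (α + α') (i + i') := by
  simp [mono, AddMonoidAlgebra.single_mul_single]

lemma single_eq_smul_mono (a : Γ × (Fin (l₁ + l₂) →₀ ℕ)) (b : F) :
    AddMonoidAlgebra.single a b = b • 𝔪 a.1 a.2 := by
  rw [mono, AddMonoidAlgebra.smul_single', mul_one]

lemma pd_mono (p : Fin (l₁ + l₂ + l₃)) (α : Γ) (i : Fin (l₁ + l₂) →₀ ℕ) :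
    𝔡 p (𝔪 α i) = fcoord F l₁ l₂ l₃ p α • 𝔪 α i
      + (icoord l₁ l₂ l₃ p i : F) • 𝔪 α (lower l₁ l₂ l₃ p i) := by
  simp [pd, mono, AddMonoidAlgebra.coeffLinearEquiv, acoord, fcoord]

lemma icoord_smul_mono_lower_add (p : Fin (l₁ + l₂ + l₃)) (α : Γ) (i i' : Fin (l₁ + l₂) →₀ ℕ) :
    (icoord l₁ l₂ l₃ p i : F) • 𝔪 α (lower l₁ l₂ l₃ p (i + i'))
      = (icoord l₁ l₂ l₃ p i : F) • 𝔪 α (lower l₁ l₂ l₃ p i + i') := by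
  by_cases h : icoord l₁ l₂ l₃ p i = 0
  · simp [h]
  · rw [lower_add p i i' (Or.inl h)]

lemma pd_mono_mul (p : Fin (l₁ + l₂ + l₃)) (α α' : Γ) (i i' : Fin (l₁ + l₂) →₀ ℕ) :
    𝔡 p (𝔪 α i * 𝔪 α' i') = 𝔡 p (𝔪 α i) * 𝔪 α' i' + 𝔪 α i * 𝔡 p (𝔪 α' i') := by
  simp only [mono_mul, pd_mono, AddSubgroup.coe_add, fcoord_add, icoord_add, Nat.cast_add,
    add_smul, add_mul, mul_add, smul_mul_assoc, mul_smul_comm, icoord_smul_mono_lower_add]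
  rw [add_comm i i', icoord_smul_mono_lower_add, add_comm (lower l₁ l₂ l₃ p i') i]
  abel

lemma pd_mul (p : Fin (l₁ + l₂ + l₃)) (x y : Alg F l₁ l₂ l₃ Γ) :
    𝔡 p (x * y) = 𝔡 p x * y + x * 𝔡 p y := by
  induction x using AddMonoidAlgebra.induction_linear with
  | zero => simp
  | add f g hf hg => simp only [add_mul, map_add, hf, hg]; abel
  | single a b =>
    induction y using AddMonoidAlgebra.induction_linear with
    | zero => simp
    | add f g hf hg => simp only [mul_add, map_add, hf, hg]; abel
    | single c d =>
      simp only [single_eq_smul_mono, smul_mul_assoc, mul_smul_comm, map_smul, pd_mono_mul,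
        smul_add]

lemma pd_comm (p q : Fin (l₁ + l₂ + l₃)) (x : Alg F l₁ l₂ l₃ Γ) :
    𝔡 p (𝔡 q x) = 𝔡 q (𝔡 p x) := by
  induction x using AddMonoidAlgebra.induction_linear with
  | zero => simp
  | add f g hf hg => simp only [map_add, hf, hg]
  | single a b =>
    obtain rfl | hpq := eq_or_ne p q
    · rfl
    simp only [single_eq_smul_mono, map_smul, pd_mono, map_add, icoord_lower_of_ne hpq,
      icoord_lower_of_ne hpq.symm, lower_comm p q]
    module

lemma pd_algebraMap (p : Fin (l₁ + l₂ + l₃)) (c : F) :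
    𝔡 p (algebraMap F (Alg F l₁ l₂ l₃ Γ) c) = 0 := by
  rw [Algebra.algebraMap_eq_smul_one, map_smul, show (1 : Alg F l₁ l₂ l₃ Γ) = 𝔪 0 0 from rfl,
    pd_mono]
  simp [fcoord_zero, icoord]

lemma pd_mul_pd_sub_pd_mul_pd_mono_single {p q : Fin (l₁ + l₂ + l₃)} (hpq : p ≠ q)
    (hp : (p : ℕ) < l₁ + l₂) (α : Γ) (j : Fin (l₁ + l₂) →₀ ℕ) :
    𝔡 p (𝔪 α (Finsupp.single ⟨p, hp⟩ 1)) * 𝔡 q (𝔪 (-α) j)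
        - 𝔡 q (𝔪 α (Finsupp.single ⟨p, hp⟩ 1)) * 𝔡 p (𝔪 (-α) j)
      = (fcoord F l₁ l₂ l₃ p α * icoord l₁ l₂ l₃ q j)
          • 𝔪 0 (Finsupp.single ⟨p, hp⟩ 1 + lower l₁ l₂ l₃ q j)
        + (icoord l₁ l₂ l₃ q j : F) • 𝔪 0 (lower l₁ l₂ l₃ q j)
        - (fcoord F l₁ l₂ l₃ q α * (icoord l₁ l₂ l₃ p j + 1)) • 𝔪 0 j := by
  have hjp : (icoord l₁ l₂ l₃ p j : F) • 𝔪 0 (Finsupp.single ⟨p, hp⟩ 1 + lower l₁ l₂ l₃ p j)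
      = (icoord l₁ l₂ l₃ p j : F) • 𝔪 0 j := by
    by_cases h : icoord l₁ l₂ l₃ p j = 0
    · simp [h]
    · rw [single_add_lower hp h]
  simp only [pd_mono, icoord_single_self hp, icoord_single_of_ne hp hpq,
    lower_of_lt hp (Finsupp.single _ 1), tsub_self, AddSubgroup.coe_neg, fcoord_neg, add_mul,
    mul_add, smul_mul_assoc, mul_smul_comm, mono_mul, add_neg_cancel, zero_add, Nat.cast_one,
    Nat.cast_zero, one_smul, zero_smul, add_zero]
  rw [smul_comm (icoord l₁ l₂ l₃ p j : F), hjp]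
  module

end Derivations

section Brackets

variable {F : Type} [Field F] {l₁ l₂ l₃ : ℕ} {Γ : AddSubgroup (Fin (l₂ + l₃) → F)}

local notation "𝔡" => pd F l₁ l₂ l₃ Γ
local notation "𝔇" => Dpq F l₁ l₂ l₃ Γ

lemma Dpq_self (p : Fin (l₁ + l₂ + l₃)) (u : Alg F l₁ l₂ l₃ Γ) : 𝔇 p p u = 0 :=
  sub_self _

lemma Dpq_swap (p q : Fin (l₁ + l₂ + l₃)) (u : Alg F l₁ l₂ l₃ Γ) : 𝔇 p q u = -𝔇 q p u :=
  (neg_sub _ _).symm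

lemma Dpq_mem (p q : Fin (l₁ + l₂ + l₃)) (u : Alg F l₁ l₂ l₃ Γ) :
    𝔇 p q u ∈ Ssub F l₁ l₂ l₃ Γ :=
  Submodule.subset_span ⟨p, q, u, rfl⟩

noncomputable def DpqL (p q : Fin (l₁ + l₂ + l₃)) :
    Alg F l₁ l₂ l₃ Γ →ₗ[F] Ssub F l₁ l₂ l₃ Γ :=
  LinearMap.codRestrict _
    (LinearMap.single F _ q ∘ₗ 𝔡 p - LinearMap.single F _ p ∘ₗ 𝔡 q) (Dpq_mem p q)

lemma wbr_Dpq_Dpq {p q : Fin (l₁ + l₂ + l₃)} (hpq : p ≠ q) (u v : Alg F l₁ l₂ l₃ Γ) :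
    wbr F l₁ l₂ l₃ Γ (𝔇 p q u) (𝔇 p q v) = 𝔇 p q (𝔡 p u * 𝔡 q v - 𝔡 q u * 𝔡 p v) := by
  funext r
  simp only [wbr, Dpq, Pi.sub_apply, sub_mul, Finset.sum_sub_distrib, Pi.single_apply,
    ite_mul, zero_mul, Finset.sum_ite_eq', Finset.mem_univ, if_true]
  rcases eq_or_ne r q with rfl | hrq
  · simp only [↓reduceIte, if_neg hpq.symm, map_sub, pd_mul, pd_comm r p, sub_zero]
    ring
  rcases eq_or_ne r p with rfl | hrp
  · simp only [↓reduceIte, if_neg hrq, map_sub, map_neg, pd_mul, pd_comm q r, zero_sub]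
    ring
  · simp [hrq, hrp]

lemma wbr_wD_Dpq (a : Fin (l₁ + l₂ + l₃) → F) (p q : Fin (l₁ + l₂ + l₃))
    (u : Alg F l₁ l₂ l₃ Γ) :
    wbr F l₁ l₂ l₃ Γ (wD F l₁ l₂ l₃ Γ a) (𝔇 p q u) = 𝔇 p q (∑ s, a s • 𝔡 s u) := by
  funext r
  simp only [wbr, wD, pd_algebraMap, mul_zero, sub_zero, ← Algebra.smul_def, Dpq,
    Pi.sub_apply, Pi.single_apply, map_sum, map_smul]
  split_ifs <;> simp [pd_comm _ p, pd_comm _ q, smul_sub, Finset.sum_sub_distrib]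

end Brackets

section Representation

variable {F : Type} [Field F] {l₁ l₂ l₃ : ℕ} {Γ : AddSubgroup (Fin (l₂ + l₃) → F)}
  {V : Type} [AddCommGroup V] [Module F V]

local notation "𝔪" => mono F l₁ l₂ l₃ Γ
local notation "𝔡" => pd F l₁ l₂ l₃ Γ
local notation "𝔖" => Ssub F l₁ l₂ l₃ Γ

variable (ρ : Ssub F l₁ l₂ l₃ Γ →ₗ[F] Module.End F V)

def IsLieRep : Prop :=
  ∀ (X Y : Wt F l₁ l₂ l₃ Γ) (hX : X ∈ 𝔖) (hY : Y ∈ 𝔖) (hXY : wbr F l₁ l₂ l₃ Γ X Y ∈ 𝔖),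
    ρ ⟨wbr F l₁ l₂ l₃ Γ X Y, hXY⟩ = ρ ⟨X, hX⟩ * ρ ⟨Y, hY⟩ - ρ ⟨Y, hY⟩ * ρ ⟨X, hX⟩

variable {ρ}

lemma IsLieRep.DpqL_pd_mul_pd_sub (hρ : IsLieRep ρ) {p q : Fin (l₁ + l₂ + l₃)} (hpq : p ≠ q)
    (u v : Alg F l₁ l₂ l₃ Γ) :
    ρ (DpqL p q (𝔡 p u * 𝔡 q v - 𝔡 q u * 𝔡 p v))
      = ρ (DpqL p q u) * ρ (DpqL p q v) - ρ (DpqL p q v) * ρ (DpqL p q u) := by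
  have h := wbr_Dpq_Dpq hpq u v
  have hmem : wbr F l₁ l₂ l₃ Γ (Dpq F l₁ l₂ l₃ Γ p q u) (Dpq F l₁ l₂ l₃ Γ p q v) ∈ 𝔖 :=
    h ▸ Dpq_mem p q _
  exact (congrArg ρ (Subtype.ext h.symm : _ = ⟨_, hmem⟩)).trans
    (hρ _ _ (Dpq_mem p q u) (Dpq_mem p q v) hmem)

lemma IsLieRep.DpqL_sum_smul_pd (hρ : IsLieRep ρ) {a : Fin (l₁ + l₂ + l₃) → F}
    (ha : wD F l₁ l₂ l₃ Γ a ∈ 𝔖) (p q : Fin (l₁ + l₂ + l₃)) (u : Alg F l₁ l₂ l₃ Γ) :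
    ρ (DpqL p q (∑ s, a s • 𝔡 s u))
      = ρ ⟨_, ha⟩ * ρ (DpqL p q u) - ρ (DpqL p q u) * ρ ⟨_, ha⟩ := by
  have h := wbr_wD_Dpq a p q u
  have hmem : wbr F l₁ l₂ l₃ Γ (wD F l₁ l₂ l₃ Γ a) (Dpq F l₁ l₂ l₃ Γ p q u) ∈ 𝔖 :=
    h ▸ Dpq_mem p q _
  exact (congrArg ρ (Subtype.ext h.symm : _ = ⟨_, hmem⟩)).trans (hρ _ _ ha (Dpq_mem p q u) hmem)

lemma IsLieRep.DpqL_mono_eq_zero (hρ : IsLieRep ρ) (hD : ∀ a, wD F l₁ l₂ l₃ Γ a ∈ 𝔖)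
    {β : Fin (l₂ + l₃) → F}
    (hβ : ∀ a, (ρ ⟨_, hD a⟩).maxGenEigenspace (beval F l₁ l₂ l₃ β a) = ⊤)
    (p q : Fin (l₁ + l₂ + l₃)) {α : Γ} (hα : (α : Fin (l₂ + l₃) → F) ≠ 0)
    (i : Fin (l₁ + l₂) →₀ ℕ) : ρ (DpqL p q (𝔪 α i)) = 0 := by
  obtain ⟨r, hr⟩ := exists_fcoord_ne_zero (l₁ := l₁) hα
  have hstep (i : Fin (l₁ + l₂) →₀ ℕ)
      (hlow : (icoord l₁ l₂ l₃ r i : F) • ρ (DpqL p q (𝔪 α (lower l₁ l₂ l₃ r i))) = 0) :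
      ρ (DpqL p q (𝔪 α i)) = 0 := by
    refine eq_zero_of_commutator_eq_smul ?_ hr (hβ (Pi.single r 1))
    rw [← hρ.DpqL_sum_smul_pd, Finset.sum_eq_single r (fun s _ hs => by simp [hs]) (by simp)]
    simp [pd_mono, hlow]
  suffices ∀ n i, icoord l₁ l₂ l₃ r i = n → ρ (DpqL p q (𝔪 α i)) = 0 from this _ i rfl
  intro n
  induction n with
  | zero => exact fun i hi => hstep i (by simp [hi])
  | succ n ih =>
    exact fun i hi => hstep i (by rw [ih _ (by simp [icoord_lower_self, hi]), smul_zero])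

/-- The bracket `[D_{p,q}(x^α t_p), D_{p,q}(x^{-α} t^j)]` acts as zero. If `q` is not a `t`-index
it is a nonzero multiple of `D_{p,q}(t^j)`; otherwise, for `j = i + 1_[q]`, it is affine in `α`
with constant term `(i_q + 1) D_{p,q}(t^i)`, which is isolated by comparing `α` with `2α`. -/
lemma IsLieRep.DpqL_mono_zero_eq_zero_of_lt [CharZero F] (hρ : IsLieRep ρ)
    (hΓ : Nondeg F l₂ l₃ Γ) (hl : 0 < l₂ + l₃)
    (hvan : ∀ p q (α : Γ), (α : Fin (l₂ + l₃) → F) ≠ 0 → ∀ i, ρ (DpqL p q (𝔪 α i)) = 0)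
    {p q : Fin (l₁ + l₂ + l₃)} (hpq : p ≠ q) (hp : (p : ℕ) < l₁ + l₂)
    (i : Fin (l₁ + l₂) →₀ ℕ) : ρ (DpqL p q (𝔪 0 i)) = 0 := by
  set K := LinearMap.ker (ρ ∘ₗ DpqL p q)
  have hK (α : Γ) (hα : (α : Fin (l₂ + l₃) → F) ≠ 0) (j : Fin (l₁ + l₂) →₀ ℕ) :
      (fcoord F l₁ l₂ l₃ p α * icoord l₁ l₂ l₃ q j)
          • 𝔪 0 (Finsupp.single ⟨p, hp⟩ 1 + lower l₁ l₂ l₃ q j)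
        + (icoord l₁ l₂ l₃ q j : F) • 𝔪 0 (lower l₁ l₂ l₃ q j)
        - (fcoord F l₁ l₂ l₃ q α * (icoord l₁ l₂ l₃ p j + 1)) • 𝔪 0 j ∈ K := by
    have hα' : ((-α : Γ) : Fin (l₂ + l₃) → F) ≠ 0 := by simpa using hα
    rw [LinearMap.mem_ker, LinearMap.comp_apply, ← pd_mul_pd_sub_pd_mul_pd_mono_single hpq hp,
      hρ.DpqL_pd_mul_pd_sub hpq, hvan p q α hα, hvan p q (-α) hα', mul_zero, sub_self]
  change 𝔪 0 i ∈ K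
  by_cases hq : (q : ℕ) < l₁ + l₂
  · obtain ⟨α, hα⟩ := hΓ.exists_fcoord_ne_zero (p := ⟨l₁, by omega⟩) le_rfl
    have hα₁ := coe_ne_zero_of_fcoord_ne_zero hα
    have hα₂ : ((α + α : Γ) : Fin (l₂ + l₃) → F) ≠ 0 := by
      rw [AddSubgroup.coe_add, ← two_smul F]
      exact smul_ne_zero two_ne_zero hα₁
    have hcomb := K.sub_mem (K.smul_mem 2 (hK α hα₁ (i + Finsupp.single ⟨q, hq⟩ 1)))
      (hK (α + α) hα₂ (i + Finsupp.single ⟨q, hq⟩ 1))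
    simp only [icoord_add, icoord_single_self hq, icoord_single_of_ne hq hpq.symm,
      lower_add_single_self hq, AddSubgroup.coe_add, fcoord_add] at hcomb
    refine (K.smul_mem_iff (Nat.cast_add_one_ne_zero (R := F) (icoord l₁ l₂ l₃ q i))).mp ?_
    convert hcomb using 1
    module
  · obtain ⟨α, hα⟩ := hΓ.exists_fcoord_ne_zero (p := q) (by omega)
    have h := hK α (coe_ne_zero_of_fcoord_ne_zero hα) i
    simp only [icoord_of_not_lt hq, lower_of_not_lt hq, Nat.cast_zero, mul_zero, zero_smul,
      zero_add, zero_sub, neg_mem_iff] at h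
    exact (K.smul_mem_iff (mul_ne_zero hα (Nat.cast_add_one_ne_zero _))).mp h

lemma IsLieRep.DpqL_mono_zero_eq_zero [CharZero F] (hρ : IsLieRep ρ)
    (hΓ : Nondeg F l₂ l₃ Γ) (hl : 0 < l₂ + l₃)
    (hvan : ∀ p q (α : Γ), (α : Fin (l₂ + l₃) → F) ≠ 0 → ∀ i, ρ (DpqL p q (𝔪 α i)) = 0)
    (p q : Fin (l₁ + l₂ + l₃)) (i : Fin (l₁ + l₂) →₀ ℕ) : ρ (DpqL p q (𝔪 0 i)) = 0 := by
  rcases eq_or_ne p q with rfl | hpq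
  · rw [show DpqL p p (𝔪 0 i) = 0 from Subtype.ext (Dpq_self p _), map_zero]
  by_cases hp : (p : ℕ) < l₁ + l₂
  · exact hρ.DpqL_mono_zero_eq_zero_of_lt hΓ hl hvan hpq hp i
  by_cases hq : (q : ℕ) < l₁ + l₂
  · rw [show DpqL p q (𝔪 0 i) = -DpqL q p (𝔪 0 i) from Subtype.ext (Dpq_swap p q _), map_neg,
      hρ.DpqL_mono_zero_eq_zero_of_lt hΓ hl hvan hpq.symm hq i, neg_zero]
  · have hpd {r : Fin (l₁ + l₂ + l₃)} (hr : ¬(r : ℕ) < l₁ + l₂) : 𝔡 r (𝔪 0 i) = 0 := by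
      simp [pd_mono, fcoord_zero, icoord_of_not_lt hr]
    have h0 : DpqL p q (𝔪 0 i) = 0 :=
      Subtype.ext (show Dpq F l₁ l₂ l₃ Γ p q (𝔪 0 i) = 0 by simp [Dpq, hpd hp, hpd hq])
    rw [h0, map_zero]

lemma IsLieRep.eq_zero [CharZero F] (hρ : IsLieRep ρ) (hΓ : Nondeg F l₂ l₃ Γ)
    (hl : 0 < l₂ + l₃) (hD : ∀ a, wD F l₁ l₂ l₃ Γ a ∈ 𝔖) {β : Fin (l₂ + l₃) → F}
    (hβ : ∀ a, (ρ ⟨_, hD a⟩).maxGenEigenspace (beval F l₁ l₂ l₃ β a) = ⊤) : ρ = 0 := by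
  have hvan := hρ.DpqL_mono_eq_zero hD hβ
  have hDpq (p q : Fin (l₁ + l₂ + l₃)) : ρ ∘ₗ DpqL p q = 0 := by
    refine AddMonoidAlgebra.lhom_ext' fun ⟨α, i⟩ => LinearMap.ext fun b => ?_
    suffices ρ (DpqL p q (𝔪 α i)) = 0 by simp [single_eq_smul_mono, this]
    by_cases hα : (α : Fin (l₂ + l₃) → F) = 0
    · rw [show α = 0 from Subtype.ext hα]
      exact hρ.DpqL_mono_zero_eq_zero hΓ hl hvan p q i
    · exact hvan p q hα i
  ext ⟨X, hX⟩ : 1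
  rw [LinearMap.zero_apply]
  induction hX using Submodule.span_induction with
  | mem X hX =>
    obtain ⟨p, q, u, rfl⟩ := hX
    exact LinearMap.congr_fun (hDpq p q) u
  | zero => exact map_zero ρ
  | add X Y hX hY hX0 hY0 => exact (map_add ρ ⟨X, hX⟩ ⟨Y, hY⟩).trans (by rw [hX0, hY0, add_zero])
  | smul c X hX hX0 => exact (map_smul ρ c ⟨X, hX⟩).trans (by rw [hX0, smul_zero])

lemma isSimpleModule_of_eq_zero (h0 : ρ = 0)
    (hV : IsIrrRep F l₁ l₂ l₃ Γ ρ ∨ IsIndecRep F l₁ l₂ l₃ Γ ρ) : IsSimpleModule F V := by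
  have hinv (N : Submodule F V) : InvSub F l₁ l₂ l₃ Γ ρ N := fun _ _ _ _ => by
    simp [h0]
  obtain ⟨⟨v, hv⟩, hsplit⟩ : (∃ v : V, v ≠ 0) ∧ ∀ N : Submodule F V, N = ⊥ ∨ N = ⊤ := by
    rcases hV with ⟨hne, hirr⟩ | ⟨hne, hindec⟩
    · exact ⟨hne, fun N => hirr N (hinv N)⟩
    · refine ⟨hne, fun N => ?_⟩
      obtain ⟨N', hN⟩ := Submodule.exists_isCompl N
      refine (hindec N N' (hinv N) (hinv N') hN.inf_eq_bot hN.sup_eq_top).imp_right fun h => ?_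
      simpa [h] using hN.sup_eq_top
  have : Nontrivial V := ⟨⟨v, 0, hv⟩⟩
  exact { eq_bot_or_eq_top := hsplit }

end Representation

section AbstractModule

variable {V : Type} [AddCommGroup V] [Module F V]
variable (ρ : ↥(Ssub F l₁ l₂ l₃ Γ) →ₗ[F] Module.End F V)

theorem stmt15
    (h23 : 3 ≤ l₂ + l₃) (hΓ : Nondeg F l₂ l₃ Γ)
    (hρ : ∀ (X Y : Wt F l₁ l₂ l₃ Γ) (hX : X ∈ Ssub F l₁ l₂ l₃ Γ)
        (hY : Y ∈ Ssub F l₁ l₂ l₃ Γ) (hXY : wbr F l₁ l₂ l₃ Γ X Y ∈ Ssub F l₁ l₂ l₃ Γ),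
      ρ ⟨wbr F l₁ l₂ l₃ Γ X Y, hXY⟩ = ρ ⟨X, hX⟩ * ρ ⟨Y, hY⟩ - ρ ⟨Y, hY⟩ * ρ ⟨X, hX⟩)
    (hD : ∀ a : Fin (l₁ + l₂ + l₃) → F, wD F l₁ l₂ l₃ Γ a ∈ Ssub F l₁ l₂ l₃ Γ)
    (σ : Γ) (μ : Fin (l₂ + l₃) → F)
    (hsingle : ∀ (v : V) (a : Fin (l₁ + l₂ + l₃) → F), ∃ n : ℕ,
      (((ρ ⟨wD F l₁ l₂ l₃ Γ a, hD a⟩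
            - beval F l₁ l₂ l₃ ((σ : Fin (l₂ + l₃) → F) + μ) a • 1) ^ n :
          Module.End F V)) v = 0)
    (hV : IsIrrRep F l₁ l₂ l₃ Γ ρ ∨ IsIndecRep F l₁ l₂ l₃ Γ ρ) :
    (σ : Fin (l₂ + l₃) → F) + μ = 0 ∧ Module.rank F V = 1 ∧
      ∀ (X : Wt F l₁ l₂ l₃ Γ) (hX : X ∈ Ssub F l₁ l₂ l₃ Γ), ρ ⟨X, hX⟩ = 0 := by
  have hβ (a : Fin (l₁ + l₂ + l₃) → F) :
      (ρ ⟨_, hD a⟩).maxGenEigenspace (beval F l₁ l₂ l₃ ((σ : Fin (l₂ + l₃) → F) + μ) a) = ⊤ :=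
    eq_top_iff.mpr fun v _ => Module.End.mem_genEigenspace_top.mpr (hsingle v a)
  have h0 : ρ = 0 := IsLieRep.eq_zero hρ hΓ (by omega) hD hβ
  refine ⟨funext fun k => ?_, Module.rank_eq_one_iff_finrank_eq_one.mpr
    (isSimpleModule_iff_finrank_eq_one.mp (isSimpleModule_of_eq_zero h0 hV)),
    fun _ _ => by rw [h0]; rfl⟩
  obtain ⟨v, hv⟩ := hV.elim (·.1) (·.1)
  have hvβ := hβ (Pi.single (Fin.cast (Nat.add_assoc ..).symm (Fin.natAdd l₁ k)) 1) ▸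
    Submodule.mem_top (x := v)
  rw [h0, LinearMap.zero_apply, beval_single, fcoord_natAdd] at hvβ
  exact eq_zero_of_mem_genEigenspace_zero hvβ hv

end AbstractModule

end SDF
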